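/- Every execution of the 2AM algorithm satisfies 2-atomicity: for each well-formed execution σ there is a sequential permutation π of its operations preserving the real-time precedence order of σ, such that every read returns the value of one of the two most recent preceding writes in π. In particular, in the permutation constructed by totally ordering the single writer's writes by version and inserting each read r immediately after max(the write it reads from, all reads preceding r), a read involved in an old-new inversion reads the second-most-recent preceding write and all other reads read the most recent preceding write. -/

import Mathlib

/-- An operation of an execution: a read or a write, with invocation time,
response time, and the version it writes (for a write) or returns (for a
read). -/
structure Op where
  isRead : Bool
  inv : ℝ
  res : ℝ
  ver : ℕ

/-- Real-time precedence: `a ≺ b` iff `a`'s response occurs before `b`'s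
invocation. -/
def Op.precedes (a b : Op) : Prop := a.res < b.inv

/-- Every execution of the 2AM algorithm satisfies 2-atomicity.
An execution is given by operations `ops : Fin k → Op` of a single-writer
multi-reader register, where (i) each operation's invocation is before its
response, (ii) the single writer's writes are totally ordered by real time and
their versions increase along that order, (iii) each read returns a version
actually written by a write invoked before the read's response (it cannot read
from the future), and (iv) by majority-quorum intersection a read never
returns a version older than that of a write completed before the read's
invocation. Then there is a sequential permutation `π` of the operations
preserving the real-time precedence of the execution in which every read
returns the value of one of the two most recent preceding writes (at most one
write lies strictly between the write it reads from and the read itself). -/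
theorem two_AM_satisfies_two_atomicity (k : ℕ) (ops : Fin k → Op)
    (hwf : ∀ i, (ops i).inv ≤ (ops i).res)
    (hwriter : ∀ i j, ¬(ops i).isRead = true → ¬(ops j).isRead = true → i ≠ j →
      (ops i).ver ≠ (ops j).ver ∧
        ((ops i).ver < (ops j).ver ↔ Op.precedes (ops i) (ops j)))
    (hreadfrom : ∀ i, (ops i).isRead = true →
      ∃ j, ¬(ops j).isRead = true ∧ (ops j).inv ≤ (ops i).res ∧
        (ops j).ver = (ops i).ver)
    (hfresh : ∀ i j, (ops i).isRead = true → ¬(ops j).isRead = true →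
      Op.precedes (ops j) (ops i) → (ops j).ver ≤ (ops i).ver) :
    ∃ π : Equiv.Perm (Fin k),
      (∀ i j, Op.precedes (ops i) (ops j) → (π i : ℕ) < (π j : ℕ)) ∧
      ∀ i, (ops i).isRead = true →
        ∃ j, ¬(ops j).isRead = true ∧ (π j : ℕ) < (π i : ℕ) ∧
          (ops j).ver = (ops i).ver ∧
          (Finset.univ.filter fun l =>
            ¬(ops l).isRead = true ∧ (π j : ℕ) < (π l : ℕ) ∧
              (π l : ℕ) < (π i : ℕ)).card ≤ 1 := by

  classical
  -- transitivity-style helper using well-formedness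
  have htrans : ∀ a b c : Fin k, Op.precedes (ops a) (ops b) →
      Op.precedes (ops b) (ops c) → Op.precedes (ops a) (ops c) := by
    intro a b c hab hbc
    exact lt_trans (lt_of_lt_of_le hab (hwf b)) hbc
  -- the freshness level
  set K : Fin k → ℕ := fun i => max (ops i).ver
      ((Finset.univ.filter fun r => (ops r).isRead = true ∧
        Op.precedes (ops r) (ops i)).sup fun r => (ops r).ver) with hKdef
  have hverK : ∀ i, (ops i).ver ≤ K i := fun i => le_max_left _ _
  have hprecK : ∀ r i, (ops r).isRead = true → Op.precedes (ops r) (ops i) →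
      (ops r).ver ≤ K i := by
    intro r i hr hpre
    refine le_max_of_le_right (Finset.le_sup (f := fun r => (ops r).ver) ?_)
    simp [hr, hpre]
  -- a read preceding a write has strictly smaller version
  have hA : ∀ r w, (ops r).isRead = true → ¬(ops w).isRead = true →
      Op.precedes (ops r) (ops w) → (ops r).ver < (ops w).ver := by
    intro r w hr hw hpre
    obtain ⟨j, hjw, hjinv, hjver⟩ := hreadfrom r hr
    have hjne : j ≠ w := by
      intro h; subst h
      exact absurd (lt_of_le_of_lt hjinv hpre) (not_lt.mpr le_rfl)
    rcases hwriter j w hjw hw hjne with ⟨hvne, hviff⟩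
    rcases lt_or_gt_of_ne hvne with hlt | hgt
    · omega
    · exfalso
      have hwj : Op.precedes (ops w) (ops j) := (hwriter w j hw hjw hjne.symm).2.mp hgt
      have : (ops w).res < (ops w).inv :=
        lt_of_lt_of_le (lt_of_lt_of_le hwj hjinv) (le_of_lt hpre)
      exact absurd (hwf w) (not_le.mpr this)
  -- K of a write is its own version
  have hKw : ∀ w, ¬(ops w).isRead = true → K w = (ops w).ver := by
    intro w hw
    refine max_eq_left (Finset.sup_le ?_)
    intro r hr
    simp only [Finset.mem_filter, Finset.mem_univ, true_and] at hr
    exact (hA r w hr.1 hw hr.2).le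
  -- K is attained
  have hKattain : ∀ i, K i = (ops i).ver ∨
      ∃ r, (ops r).isRead = true ∧ Op.precedes (ops r) (ops i) ∧ (ops r).ver = K i := by
    intro i
    set S := Finset.univ.filter fun r => (ops r).isRead = true ∧
        Op.precedes (ops r) (ops i) with hS
    by_cases hle : (S.sup fun r => (ops r).ver) ≤ (ops i).ver
    · left; exact max_eq_left hle
    · right
      have hKi : K i = S.sup fun r => (ops r).ver := max_eq_right (le_of_not_ge hle)
      have hne : S.Nonempty := by
        rw [Finset.nonempty_iff_ne_empty]
        intro h
        rw [h, Finset.sup_empty] at hle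
        exact hle (Nat.zero_le _)
      obtain ⟨r, hrS, hrv⟩ := Finset.exists_mem_eq_sup S hne fun r => (ops r).ver
      simp only [hS, Finset.mem_filter, Finset.mem_univ, true_and] at hrS
      exact ⟨r, hrS.1, hrS.2, by rw [hKi, hrv]⟩
  -- K is monotone along precedence
  have hKle : ∀ i j, Op.precedes (ops i) (ops j) → K i ≤ K j := by
    intro i j hpre
    refine max_le ?_ (Finset.sup_le ?_)
    · by_cases hi : (ops i).isRead = true
      · exact hprecK i j hi hpre
      · by_cases hj : (ops j).isRead = true
        · exact (hfresh j i hj hi hpre).trans (hverK j)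
        · have hne : i ≠ j := by
            intro h; subst h
            exact absurd (hwf i) (not_le.mpr hpre)
          exact ((hwriter i j hi hj hne).2.mpr hpre).le.trans (hverK j)
    · intro r hr
      simp only [Finset.mem_filter, Finset.mem_univ, true_and] at hr
      exact hprecK r j hr.1 (htrans r i j hr.2 hpre)
  -- the sort key
  set b : Fin k → ℕ := fun i => if (ops i).isRead = true then 1 else 0 with hbdef
  set key : Fin k → ℕ ×ₗ (ℕ ×ₗ (ℝ ×ₗ Fin k)) :=
    fun i => toLex (K i, toLex (b i, toLex ((ops i).res, i))) with hkeydef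
  have hkeyinj : Function.Injective key := by
    intro i j h
    simp only [hkeydef] at h
    have h1 := (toLex.injective h)
    have h2 := (toLex.injective (congrArg Prod.snd h1))
    have h3 := (toLex.injective (congrArg Prod.snd h2))
    exact congrArg Prod.snd h3
  -- precedence implies strictly smaller key
  have hkeylt : ∀ i j, Op.precedes (ops i) (ops j) → key i < key j := by
    intro i j hpre
    have hle := hKle i j hpre
    simp only [hkeydef]
    rw [Prod.Lex.lt_iff]
    rcases lt_or_eq_of_le hle with h | h
    · exact Or.inl h
    · refine Or.inr ⟨h, ?_⟩
      rw [Prod.Lex.lt_iff]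
      by_cases hi : (ops i).isRead = true
      · by_cases hj : (ops j).isRead = true
        · refine Or.inr ⟨by simp [hbdef, hi, hj], ?_⟩
          rw [Prod.Lex.lt_iff]
          exact Or.inl (lt_of_lt_of_le hpre (hwf j))
        · exfalso
          have hKij : K i < K j := by
            rcases hKattain i with hKi | ⟨r, hr, hrpre, hrv⟩
            · calc K i = (ops i).ver := hKi
                _ < (ops j).ver := hA i j hi hj hpre
                _ ≤ K j := hverK j
            · calc K i = (ops r).ver := hrv.symm
                _ < (ops j).ver := hA r j hr hj (htrans r i j hrpre hpre)
                _ ≤ K j := hverK j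
          omega
      · by_cases hj : (ops j).isRead = true
        · exact Or.inl (by simp [hbdef, hi, hj])
        · exfalso
          have hne : i ≠ j := by
            intro heq; subst heq; exact absurd (hwf i) (not_le.mpr hpre)
          have := (hwriter i j hi hj hne).2.mpr hpre
          rw [hKw i hi, hKw j hj] at h
          omega
  -- build the permutation from sorting
  set π : Equiv.Perm (Fin k) := (Tuple.sort key)⁻¹ with hπdef
  have hmono : StrictMono (key ∘ Tuple.sort key) :=
    (Tuple.monotone_sort key).strictMono_of_injective
      (hkeyinj.comp (Equiv.injective _))
  have hiff : ∀ i j : Fin k, key i < key j ↔ (π i : ℕ) < (π j : ℕ) := by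
    intro i j
    have e1 : key i = (key ∘ Tuple.sort key) (π i) := by
      simp [hπdef, Function.comp]
    have e2 : key j = (key ∘ Tuple.sort key) (π j) := by
      simp [hπdef, Function.comp]
    rw [e1, e2, hmono.lt_iff_lt]
    exact Fin.lt_iff_val_lt_val
  refine ⟨π, fun i j hpre => (hiff i j).mp (hkeylt i j hpre), ?_⟩
  intro i hi
  obtain ⟨j, hjw, hjinv, hjver⟩ := hreadfrom i hi
  have hKj : K j = (ops i).ver := by rw [hKw j hjw, hjver]
  have hji : key j < key i := by
    simp only [hkeydef]
    rw [Prod.Lex.lt_iff]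
    rcases lt_or_eq_of_le (hKj ▸ hverK i : K j ≤ K i) with h | h
    · exact Or.inl h
    · refine Or.inr ⟨h, ?_⟩
      rw [Prod.Lex.lt_iff]
      exact Or.inl (by simp [hbdef, hi, hjw])
  refine ⟨j, hjw, (hiff j i).mp hji, hjver, ?_⟩
  -- every write strictly between j and i in π has version exactly K i
  have hmid : ∀ l, ¬(ops l).isRead = true → (π j : ℕ) < (π l : ℕ) →
      (π l : ℕ) < (π i : ℕ) → (ops l).ver = K i := by
    intro l hlw hjl hli
    have hkjl := (hiff j l).mpr hjl
    have hkli := (hiff l i).mpr hli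
    have hnejl : j ≠ l := fun heq => by subst heq; exact lt_irrefl _ hjl
    have hlver : (ops i).ver < (ops l).ver := by
      simp only [hkeydef] at hkjl
      rw [Prod.Lex.lt_iff] at hkjl
      rcases hkjl with h | ⟨h, _⟩
      · rwa [hKj, hKw l hlw] at h
      · exfalso
        rw [hKj, hKw l hlw] at h
        exact (hwriter j l hjw hlw hnejl).1 (hjver.trans h)
    have hlle : (ops l).ver ≤ K i := by
      simp only [hkeydef] at hkli
      rw [Prod.Lex.lt_iff] at hkli
      rcases hkli with h | ⟨h, _⟩
      · rw [hKw l hlw] at h; simp only [ofLex_toLex] at h; omega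
      · rw [hKw l hlw] at h; simp only [ofLex_toLex] at h; omega
    rcases lt_or_eq_of_le hlle with hlt | heq
    · exfalso
      rcases hKattain i with hKi | ⟨r, hr, hrpre, hrv⟩
      · omega
      obtain ⟨w, hww, hwinv, hwver⟩ := hreadfrom r hr
      have hwKi : (ops w).ver = K i := hwver.trans hrv
      have hlw' : l ≠ w := fun heq => by rw [heq, hwKi] at hlt; omega
      have hlprew : Op.precedes (ops l) (ops w) :=
        (hwriter l w hlw hww hlw').2.mp (by omega)
      have hlprei : Op.precedes (ops l) (ops i) :=
        lt_of_lt_of_le (lt_of_lt_of_le hlprew hwinv) (le_of_lt hrpre)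
      have := hfresh i l hi hlw hlprei
      omega
    · exact heq
  rw [Finset.card_le_one]
  intro l hl l' hl'
  simp only [Finset.mem_filter, Finset.mem_univ, true_and] at hl hl'
  obtain ⟨hlw, hl1, hl2⟩ := hl
  obtain ⟨hlw', hl1', hl2'⟩ := hl'
  by_contra hne
  exact (hwriter l l' hlw hlw' hne).1 ((hmid l hlw hl1 hl2).trans (hmid l' hlw' hl1' hl2').symm)
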